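/- For any 0 < τ ≤ 1/2, the set T_τ = {(v,w) ∈ S²×S² : ½|v+w| + ½(v+w)·e₁ = τ and 1 - ½|v+w| = 1 - τ} is nonempty, and the image of T_τ under the first projection pr₁ : S²×S² → S² equals {v ∈ S² : |v·e₁| ≤ √(1-τ²)}. -/

import Mathlib

/-!
For `u = v + w`, the condition `‖w‖ = ‖v‖` is equivalent to `‖u‖² = 2⟪u, v⟫`, so `(v, w) ∈ T_τ`
amounts to `u ⊥ e₁`, `‖u‖ = 2τ` and `⟪u, v⟫ = 2τ²`. Since `u ⊥ e₁`, Cauchy–Schwarz bounds `⟪u, v⟫`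
by `‖u‖` times the length `√(1 - ⟪v, e₁⟫²)` of the component of `v` orthogonal to `e₁`, which gives
`τ² ≤ 1 - ⟪v, e₁⟫²`. Conversely, because the ambient dimension is at least 3, that component and a
vector orthogonal to both `e₁` and `v` span a plane inside `e₁ᗮ` in which the bound is attained; this
produces `u`, and `w = u - v`.
-/

open scoped RealInnerProductSpace
open Module

noncomputable def e1 : EuclideanSpace ℝ (Fin 3) := EuclideanSpace.single 0 1

/-- The Fukaya–Oh–Ohta–Ono torus `T_τ ⊂ S² × S²` in Oakley–Usher coordinates. -/
noncomputable def fooTorus (τ : ℝ) : Set (EuclideanSpace ℝ (Fin 3) × EuclideanSpace ℝ (Fin 3)) :=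
  {p | ‖p.1‖ = 1 ∧ ‖p.2‖ = 1 ∧
    (1 / 2) * ‖p.1 + p.2‖ + (1 / 2) * ⟪p.1 + p.2, e1⟫ = τ ∧
    1 - (1 / 2) * ‖p.1 + p.2‖ = 1 - τ}

section
variable {E : Type*} [NormedAddCommGroup E] [InnerProductSpace ℝ E]

lemma norm_sub_eq_norm_iff_sq_eq_two_mul_inner {u v : E} :
    ‖u - v‖ = ‖v‖ ↔ ‖u‖ ^ 2 = 2 * ⟪u, v⟫ := by
  rw [← sq_eq_sq₀ (norm_nonneg _) (norm_nonneg _), norm_sub_sq_real]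
  constructor <;> intro h <;> linarith

lemma inner_sub_inner_smul_self_left_eq_zero {e : E} (he : ‖e‖ = 1) (v : E) :
    ⟪v - ⟪e, v⟫ • e, e⟫ = 0 := by
  rw [inner_sub_left, real_inner_smul_left, real_inner_self_eq_norm_sq, he, real_inner_comm]
  ring

lemma norm_sub_inner_smul_sq {e : E} (he : ‖e‖ = 1) (v : E) :
    ‖v - ⟪e, v⟫ • e‖ ^ 2 = ‖v‖ ^ 2 - ⟪v, e⟫ ^ 2 := by
  rw [norm_sub_sq_real, real_inner_smul_right, norm_smul, he, real_inner_comm, Real.norm_eq_abs,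
    mul_one, sq_abs]
  ring

lemma inner_sq_le_of_inner_eq_zero {e u : E} (he : ‖e‖ = 1) (hu : ⟪u, e⟫ = 0) (v : E) :
    ⟪u, v⟫ ^ 2 ≤ ‖u‖ ^ 2 * (‖v‖ ^ 2 - ⟪v, e⟫ ^ 2) := by
  have hv : ⟪u, v⟫ = ⟪u, v - ⟪e, v⟫ • e⟫ := by
    rw [inner_sub_right, real_inner_smul_right, hu, mul_zero, sub_zero]
  rw [hv, ← norm_sub_inner_smul_sq he, sq, sq, sq, ← real_inner_self_eq_norm_mul_norm,
    ← real_inner_self_eq_norm_mul_norm]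
  exact real_inner_mul_inner_self_le _ _

lemma exists_inner_eq_and_norm_sq_eq {p q : E} (hpq : ⟪p, q⟫ = 0) (hq : ‖q‖ = ‖p‖) (hp : p ≠ 0)
    {c d : ℝ} (h : c ^ 2 ≤ d * ‖p‖ ^ 2) :
    ∃ a b : ℝ, ⟪a • p + b • q, p⟫ = c ∧ ‖a • p + b • q‖ ^ 2 = d := by
  have hs : 0 < ‖p‖ ^ 2 := by positivity
  have hroot := Real.sq_sqrt (sub_nonneg.mpr h)
  refine ⟨c / ‖p‖ ^ 2, √(d * ‖p‖ ^ 2 - c ^ 2) / ‖p‖ ^ 2, ?_, ?_⟩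
  · rw [inner_add_left, real_inner_smul_left, real_inner_smul_left, real_inner_self_eq_norm_sq,
      real_inner_comm, hpq, mul_zero, add_zero]
    field_simp
  · rw [norm_add_sq_real, real_inner_smul_left, real_inner_smul_right, hpq, norm_smul, norm_smul,
      hq, Real.norm_eq_abs, Real.norm_eq_abs, mul_pow, mul_pow, sq_abs, sq_abs, div_pow, div_pow, hroot]
    field_simp
    ring

lemma exists_inner_eq_zero_inner_eq_zero_norm_eq [FiniteDimensional ℝ E] (hE : 3 ≤ finrank ℝ E)
    (e v : E) {r : ℝ} (hr : 0 ≤ r) : ∃ q : E, ⟪e, q⟫ = 0 ∧ ⟪v, q⟫ = 0 ∧ ‖q‖ = r := by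
  set K := Submodule.span ℝ ({e, v} : Set E)
  have hK : finrank ℝ K ≤ 2 := by
    classical
    refine (finrank_span_le_card _).trans ?_
    simpa using Finset.card_le_two
  have : Nontrivial Kᗮ := by
    rw [← Module.finrank_pos_iff (R := ℝ)]
    have := K.finrank_add_finrank_orthogonal
    omega
  obtain ⟨q, hq⟩ := exists_norm_eq Kᗮ hr
  exact ⟨q, K.inner_right_of_mem_orthogonal (Submodule.subset_span (by simp)) q.2,
    K.inner_right_of_mem_orthogonal (Submodule.subset_span (by simp)) q.2, hq⟩

theorem exists_norm_eq_norm_add_eq_inner_add_eq_zero_iff [FiniteDimensional ℝ E]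
    (hE : 3 ≤ finrank ℝ E) {e : E} (he : ‖e‖ = 1) (v : E) {τ : ℝ} (hτ : 0 < τ) :
    (∃ w : E, ‖w‖ = ‖v‖ ∧ ‖v + w‖ = 2 * τ ∧ ⟪v + w, e⟫ = 0) ↔ ⟪v, e⟫ ^ 2 ≤ ‖v‖ ^ 2 - τ ^ 2 := by
  constructor
  · rintro ⟨w, hw, hu, hue⟩
    have huv : ⟪v + w, v⟫ = 2 * τ ^ 2 := by
      have h := norm_sub_eq_norm_iff_sq_eq_two_mul_inner.mp
        (by rwa [add_sub_cancel_left] : ‖v + w - v‖ = ‖v‖)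
      rw [hu] at h
      linarith
    have hCS := inner_sq_le_of_inner_eq_zero he hue v
    rw [huv, hu] at hCS
    have : (2 * τ) ^ 2 * τ ^ 2 ≤ (2 * τ) ^ 2 * (‖v‖ ^ 2 - ⟪v, e⟫ ^ 2) := by linarith
    linarith [le_of_mul_le_mul_left this (by positivity)]
  · intro h
    set p := v - ⟪e, v⟫ • e
    have hpe : ⟪p, e⟫ = 0 := inner_sub_inner_smul_self_left_eq_zero he v
    have hp : τ ^ 2 ≤ ‖p‖ ^ 2 := by rw [norm_sub_inner_smul_sq he]; linarith
    obtain ⟨q, hqe, hqv, hq⟩ := exists_inner_eq_zero_inner_eq_zero_norm_eq hE e v (norm_nonneg p)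
    have hpq : ⟪p, q⟫ = 0 := by
      rw [inner_sub_left, real_inner_smul_left, hqv, hqe, mul_zero, sub_zero]
    obtain ⟨a, b, hup, hu⟩ := exists_inner_eq_and_norm_sq_eq hpq hq
      (norm_pos_iff.mp (by nlinarith [norm_nonneg p])) (c := 2 * τ ^ 2) (d := (2 * τ) ^ 2)
      (by nlinarith)
    set u := a • p + b • q
    have hue : ⟪u, e⟫ = 0 := by
      rw [inner_add_left, real_inner_smul_left, real_inner_smul_left, hpe, real_inner_comm, hqe]
      ring
    have huv : ⟪u, v⟫ = 2 * τ ^ 2 := by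
      have hv : v = p + ⟪e, v⟫ • e := (sub_add_cancel _ _).symm
      rwa [hv, inner_add_right, real_inner_smul_right, hue, mul_zero, add_zero]
    have hu' : ‖u‖ = 2 * τ := by
      rw [← sq_eq_sq₀ (norm_nonneg _) (by positivity), hu]
    refine ⟨u - v, ?_, by rwa [add_sub_cancel], by rwa [add_sub_cancel]⟩
    rw [norm_sub_eq_norm_iff_sq_eq_two_mul_inner, huv, hu]
    ring

end

lemma mem_fooTorus_iff {τ : ℝ} {v w : EuclideanSpace ℝ (Fin 3)} :
    (v, w) ∈ fooTorus τ ↔ ‖v‖ = 1 ∧ ‖w‖ = 1 ∧ ‖v + w‖ = 2 * τ ∧ ⟪v + w, e1⟫ = 0 := by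
  simp only [fooTorus, Set.mem_ofPred_eq]
  constructor
  · rintro ⟨hv, hw, h₁, h₂⟩
    exact ⟨hv, hw, by linarith, by linarith⟩
  · rintro ⟨hv, hw, h₁, h₂⟩
    exact ⟨hv, hw, by rw [h₁, h₂]; ring, by rw [h₁]; ring⟩

lemma norm_e1 : ‖e1‖ = 1 := by simp [e1]

lemma fst_image_fooTorus {τ : ℝ} (hτ0 : 0 < τ) (hτ : τ ≤ 1) :
    Prod.fst '' fooTorus τ =
      {v : EuclideanSpace ℝ (Fin 3) | ‖v‖ = 1 ∧ |⟪v, e1⟫| ≤ Real.sqrt (1 - τ ^ 2)} := by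
  ext v
  simp only [Set.mem_image, Prod.exists, exists_and_right, exists_eq_right, mem_fooTorus_iff,
    Set.mem_ofPred_eq, exists_and_left]
  refine and_congr_right fun hv => ?_
  have hE : 3 ≤ finrank ℝ (EuclideanSpace ℝ (Fin 3)) := by simp
  rw [Real.le_sqrt (abs_nonneg _) (by nlinarith), sq_abs]
  simpa only [hv, one_pow] using exists_norm_eq_norm_add_eq_inner_add_eq_zero_iff hE norm_e1 v hτ0

/-- for `0 < τ ≤ 1/2`, the torus `T_τ` is nonempty and its image under the
first projection is `{v ∈ S² : |v·e₁| ≤ √(1-τ²)}`. -/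
theorem fooTorus_nonempty_and_projection (τ : ℝ) (hτ0 : 0 < τ) (hτ : τ ≤ 1 / 2) :
    (fooTorus τ).Nonempty ∧
      Prod.fst '' fooTorus τ =
        {v : EuclideanSpace ℝ (Fin 3) | ‖v‖ = 1 ∧ |⟪v, e1⟫| ≤ Real.sqrt (1 - τ ^ 2)} := by
  have hproj := fst_image_fooTorus hτ0 (by linarith)
  refine ⟨(Set.image_nonempty (f := Prod.fst)).mp ?_, hproj⟩
  rw [hproj]
  exact ⟨EuclideanSpace.single 1 1, by simp, by simp [e1, EuclideanSpace.inner_single_left]⟩
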